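/- arXiv:0805.2981 — 5 statements merged into one kernel-verified Lean document; each statement's English description precedes it below -/
import Mathlib

section
/- Let K be a field and L a Lie algebra over K with a direct sum decomposition L = S ⊕ M of K-vector spaces, where S is a Lie subalgebra of L and [S, M] ⊆ M. Writing z = z_S + z_M for the decomposition of z ∈ L along L = S ⊕ M, the operation B(x, y) := [x_S, y_S] + [x_S, y_M] + [x_M, y_S] is bilinear, alternating, and satisfies the Jacobi identity; hence B is a Lie bracket on the underlying vector space of L (the Inönü–Wigner contraction g of L associated with the reduction L ⊇ S), in which S is a Lie subalgebra and M is an abelian ideal. -/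
/-- The projection of `L` onto the subalgebra `S` along the complement `M`. -/
noncomputable def projS {K : Type*} [Field K] {L : Type*} [LieRing L] [LieAlgebra K L]
    (S : LieSubalgebra K L) (M : Submodule K L) (h : IsCompl S.toSubmodule M) :
    L →ₗ[K] L :=
  S.toSubmodule.subtype ∘ₗ Submodule.linearProjOfIsCompl S.toSubmodule M h

/-- The projection of `L` onto the complement `M` along the subalgebra `S`. -/
noncomputable def projM {K : Type*} [Field K] {L : Type*} [LieRing L] [LieAlgebra K L]
    (S : LieSubalgebra K L) (M : Submodule K L) (h : IsCompl S.toSubmodule M) :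
    L →ₗ[K] L :=
  M.subtype ∘ₗ Submodule.linearProjOfIsCompl M S.toSubmodule h.symm

/-- The bracket of the Inönü–Wigner contraction associated with the reduction `L ⊇ S`:
`B(x, y) = [x_S, y_S] + [x_S, y_M] + [x_M, y_S]`. -/
noncomputable def iwBracket {K : Type*} [Field K] {L : Type*} [LieRing L] [LieAlgebra K L]
    (S : LieSubalgebra K L) (M : Submodule K L) (h : IsCompl S.toSubmodule M)
    (x y : L) : L :=
  ⁅projS S M h x, projS S M h y⁆ + ⁅projS S M h x, projM S M h y⁆
    + ⁅projM S M h x, projS S M h y⁆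

/-!
With respect to `L = S ⊕ M`, the bracket `B` has components `B(x, y)_S = [x_S, y_S]` and
`B(x, y)_M = [x_S, y_M] + [x_M, y_S]`, the latter lying in `M` because `[S, M] ⊆ M`. So `B` is
the semidirect-product bracket of `S` acting on the `S`-module `M`, with `M` made abelian, and
its Jacobi identity is the Jacobi identity of `L` for triples with at most one entry in `M`.
-/

section InonuWigner

variable {K : Type*} [Field K] {L : Type*} [LieRing L] [LieAlgebra K L]
  (S : LieSubalgebra K L) (M : Submodule K L) (h : IsCompl S.toSubmodule M)

lemma projS_mem (z : L) : projS S M h z ∈ S := Submodule.projection_apply_mem h z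

lemma projM_mem (z : L) : projM S M h z ∈ M := Submodule.projection_apply_mem h.symm z

variable {S M}

lemma projS_eq_self {x : L} (hx : x ∈ S) : projS S M h x = x :=
  Submodule.projection_apply_of_mem_left h hx

lemma projS_eq_zero {x : L} (hx : x ∈ M) : projS S M h x = 0 :=
  Submodule.projection_apply_of_mem_right h hx

lemma projM_eq_self {x : L} (hx : x ∈ M) : projM S M h x = x :=
  Submodule.projection_apply_of_mem_left h.symm hx

lemma projM_eq_zero {x : L} (hx : x ∈ S) : projM S M h x = 0 :=
  Submodule.projection_apply_of_mem_right h.symm hx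

lemma projS_add_of_mem {a b : L} (ha : a ∈ S) (hb : b ∈ M) : projS S M h (a + b) = a := by
  rw [map_add, projS_eq_self h ha, projS_eq_zero h hb, add_zero]

lemma projM_add_of_mem {a b : L} (ha : a ∈ S) (hb : b ∈ M) : projM S M h (a + b) = b := by
  rw [map_add, projM_eq_zero h ha, projM_eq_self h hb, zero_add]

lemma iwBracket_add_left (x x' y : L) :
    iwBracket S M h (x + x') y = iwBracket S M h x y + iwBracket S M h x' y := by
  simp only [iwBracket, map_add, add_lie]
  abel

lemma iwBracket_add_right (x y y' : L) :
    iwBracket S M h x (y + y') = iwBracket S M h x y + iwBracket S M h x y' := by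
  simp only [iwBracket, map_add, lie_add]
  abel

lemma iwBracket_smul_left (a : K) (x y : L) :
    iwBracket S M h (a • x) y = a • iwBracket S M h x y := by
  simp only [iwBracket, map_smul, smul_lie, smul_add]

lemma iwBracket_smul_right (a : K) (x y : L) :
    iwBracket S M h x (a • y) = a • iwBracket S M h x y := by
  simp only [iwBracket, map_smul, lie_smul, smul_add]

lemma iwBracket_self (x : L) : iwBracket S M h x x = 0 := by
  rw [iwBracket, lie_self, zero_add, ← lie_skew, neg_add_cancel]

lemma lie_projS_projM_add_lie_projM_projS_mem (hSM : ∀ x ∈ S, ∀ m ∈ M, ⁅x, m⁆ ∈ M) (x y : L) :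
    ⁅projS S M h x, projM S M h y⁆ + ⁅projM S M h x, projS S M h y⁆ ∈ M := by
  rw [← lie_skew (projM S M h x)]
  exact M.add_mem (hSM _ (projS_mem S M h x) _ (projM_mem S M h y))
    (M.neg_mem (hSM _ (projS_mem S M h y) _ (projM_mem S M h x)))

lemma projS_iwBracket (hSM : ∀ x ∈ S, ∀ m ∈ M, ⁅x, m⁆ ∈ M) (x y : L) :
    projS S M h (iwBracket S M h x y) = ⁅projS S M h x, projS S M h y⁆ := by
  rw [iwBracket, add_assoc]
  exact projS_add_of_mem h (S.lie_mem (projS_mem S M h x) (projS_mem S M h y))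
    (lie_projS_projM_add_lie_projM_projS_mem h hSM x y)

lemma projM_iwBracket (hSM : ∀ x ∈ S, ∀ m ∈ M, ⁅x, m⁆ ∈ M) (x y : L) :
    projM S M h (iwBracket S M h x y) =
      ⁅projS S M h x, projM S M h y⁆ + ⁅projM S M h x, projS S M h y⁆ := by
  rw [iwBracket, add_assoc]
  exact projM_add_of_mem h (S.lie_mem (projS_mem S M h x) (projS_mem S M h y))
    (lie_projS_projM_add_lie_projM_projS_mem h hSM x y)

lemma iwBracket_leibniz (hSM : ∀ x ∈ S, ∀ m ∈ M, ⁅x, m⁆ ∈ M) (x y z : L) :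
    iwBracket S M h x (iwBracket S M h y z) =
      iwBracket S M h (iwBracket S M h x y) z + iwBracket S M h y (iwBracket S M h x z) := by
  rw [iwBracket.eq_1 S M h x (iwBracket S M h y z),
    iwBracket.eq_1 S M h (iwBracket S M h x y) z, iwBracket.eq_1 S M h y (iwBracket S M h x z)]
  simp only [projS_iwBracket h hSM, projM_iwBracket h hSM, lie_add, add_lie, lie_lie]
  abel

lemma iwBracket_mem_S_of_mem_S {x y : L} (hx : x ∈ S) (hy : y ∈ S) :
    iwBracket S M h x y ∈ S := by
  rw [iwBracket, projS_eq_self h hx, projS_eq_self h hy, projM_eq_zero h hx, projM_eq_zero h hy,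
    lie_zero, zero_lie, add_zero, add_zero]
  exact S.lie_mem hx hy

lemma iwBracket_mem_M_of_mem_M_right (hSM : ∀ x ∈ S, ∀ m ∈ M, ⁅x, m⁆ ∈ M) (x : L) {m : L}
    (hm : m ∈ M) : iwBracket S M h x m ∈ M := by
  rw [iwBracket, projS_eq_zero h hm, projM_eq_self h hm, lie_zero, lie_zero, zero_add, add_zero]
  exact hSM _ (projS_mem S M h x) _ hm

lemma iwBracket_eq_zero_of_mem_M {m m' : L} (hm : m ∈ M) (hm' : m' ∈ M) :
    iwBracket S M h m m' = 0 := by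
  rw [iwBracket, projS_eq_zero h hm, projS_eq_zero h hm', lie_zero, zero_lie, lie_zero,
    add_zero, add_zero]

end InonuWigner

/-- If `L = S ⊕ M` with `S` a Lie subalgebra and `[S, M] ⊆ M`, then the
operation `B(x, y) := [x_S, y_S] + [x_S, y_M] + [x_M, y_S]` is bilinear, alternating and
satisfies the Jacobi identity, hence is a Lie bracket on `L` (the Inönü–Wigner contraction),
in which `S` is a Lie subalgebra and `M` is an abelian ideal. -/
theorem stmt0 {K : Type*} [Field K] {L : Type*} [LieRing L] [LieAlgebra K L]
    (S : LieSubalgebra K L) (M : Submodule K L)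
    (hcompl : IsCompl S.toSubmodule M)
    (hSM : ∀ x ∈ S, ∀ m ∈ M, ⁅x, m⁆ ∈ M) :
    -- B is bilinear
    (∀ x x' y : L, iwBracket S M hcompl (x + x') y
        = iwBracket S M hcompl x y + iwBracket S M hcompl x' y) ∧
    (∀ (a : K) (x y : L), iwBracket S M hcompl (a • x) y = a • iwBracket S M hcompl x y) ∧
    (∀ x y y' : L, iwBracket S M hcompl x (y + y')
        = iwBracket S M hcompl x y + iwBracket S M hcompl x y') ∧
    (∀ (a : K) (x y : L), iwBracket S M hcompl x (a • y) = a • iwBracket S M hcompl x y) ∧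
    -- B is alternating
    (∀ x : L, iwBracket S M hcompl x x = 0) ∧
    -- B satisfies the Jacobi identity (Leibniz form)
    (∀ x y z : L, iwBracket S M hcompl x (iwBracket S M hcompl y z)
        = iwBracket S M hcompl (iwBracket S M hcompl x y) z
          + iwBracket S M hcompl y (iwBracket S M hcompl x z)) ∧
    -- S is a subalgebra for B
    (∀ x ∈ S, ∀ y ∈ S, iwBracket S M hcompl x y ∈ S) ∧
    -- M is an ideal for B
    (∀ x : L, ∀ m ∈ M, iwBracket S M hcompl x m ∈ M) ∧
    -- M is abelian for B
    (∀ m ∈ M, ∀ m' ∈ M, iwBracket S M hcompl m m' = 0) :=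
  ⟨iwBracket_add_left hcompl, iwBracket_smul_left hcompl, iwBracket_add_right hcompl,
    iwBracket_smul_right hcompl, iwBracket_self hcompl, iwBracket_leibniz hcompl hSM,
    fun _ hx _ hy => iwBracket_mem_S_of_mem_S hcompl hx hy,
    fun x _ hm => iwBracket_mem_M_of_mem_M_right hcompl hSM x hm,
    fun _ hm _ hm' => iwBracket_eq_zero_of_mem_M hcompl hm hm'⟩
end

section
/- Let K be a field and L a finite-dimensional Lie algebra over K with basis X_1, …, X_n and structure constants C_{ij}^k, such that span(X_1, …, X_s) is a Lie subalgebra S and M := span(X_{s+1}, …, X_n) satisfies [S, M] ⊆ M. Let C'_{ij}^k be the structure constants of the associated Inönü–Wigner contraction g (C'_{ij}^k = C_{ij}^k unless both i > s and j > s, in which case C'_{ij}^k = 0). Then for every 1 ≤ i ≤ s, the coadjoint vector fields coincide: D_i = D'_i as derivations of K[x_1, …, x_n]. Consequently, every polynomial invariant of the contraction g (a polynomial F with D'_iF = 0 for all 1 ≤ i ≤ n) is a solution of the missing label subsystem of L, i.e. satisfies D_iF = 0 for all 1 ≤ i ≤ s. -/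
/-- The coadjoint vector field `D_i = Σ_{j,k} C_{ij}^k x_k ∂/∂x_j` associated with the
structure constants `C`, acting on the polynomial ring `K[x_1, …, x_n]`. -/
noncomputable def coadD {K : Type*} [Field K] {n : ℕ}
    (C : Fin n → Fin n → Fin n → K) (i : Fin n) :
    MvPolynomial (Fin n) K → MvPolynomial (Fin n) K :=
  fun F => ∑ j, ∑ k, C i j k • (MvPolynomial.X k * MvPolynomial.pderiv j F)

theorem coadD_congr_row {K : Type*} [Field K] {n : ℕ} {C C' : Fin n → Fin n → Fin n → K}
    {i : Fin n} (h : C i = C' i) : coadD C i = coadD C' i := by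
  unfold coadD
  rw [h]

theorem stmt3_general {K : Type*} [Field K] {n s : ℕ}
    (C : Fin n → Fin n → Fin n → K) (C' : Fin n → Fin n → Fin n → K)
    (hC' : ∀ i j k, C' i j k = if s ≤ (i : ℕ) ∧ s ≤ (j : ℕ) then 0 else C i j k) :
    (∀ i : Fin n, (i : ℕ) < s → ∀ F : MvPolynomial (Fin n) K,
        coadD C i F = coadD C' i F) ∧
    (∀ F : MvPolynomial (Fin n) K, (∀ i : Fin n, coadD C' i F = 0) →
        ∀ i : Fin n, (i : ℕ) < s → coadD C i F = 0) := by
  have coadD_eq : ∀ i : Fin n, (i : ℕ) < s → coadD C i = coadD C' i := fun i hi =>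
    coadD_congr_row <| funext₂ fun j k => by
      rw [hC', if_neg fun h => (not_lt.2 h.1) hi]
  exact ⟨fun i hi F => congrFun (coadD_eq i hi) F,
    fun F hF i hi => (congrFun (coadD_eq i hi) F).trans (hF i)⟩

/-- Let `X_1, …, X_n` be a basis of a Lie algebra `L` adapted to a reduction
chain: `S = span(X_1, …, X_s)` is a subalgebra and `M = span(X_{s+1}, …, X_n)` satisfies
`[S, M] ⊆ M`.  If `C'` are the structure constants of the associated Inönü–Wigner contraction
(`C'ᵢⱼᵏ = Cᵢⱼᵏ` except `C'ᵢⱼᵏ = 0` when both `i, j` exceed `s`), then the coadjoint vector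
fields `D_i` and `D'_i` coincide for `1 ≤ i ≤ s`; consequently every polynomial invariant of
the contraction solves the missing label subsystem `D_iF = 0`, `1 ≤ i ≤ s`, of `L`. -/
theorem stmt3 {K : Type*} [Field K] {L : Type*} [LieRing L] [LieAlgebra K L]
    {n s : ℕ} (hsn : s ≤ n) (b : Module.Basis (Fin n) K L)
    (C : Fin n → Fin n → Fin n → K)
    (hC : ∀ i j, ⁅b i, b j⁆ = ∑ k, C i j k • b k)
    (hSsub : ∀ x ∈ Submodule.span K (⇑b '' {i : Fin n | (i : ℕ) < s}),
        ∀ y ∈ Submodule.span K (⇑b '' {i : Fin n | (i : ℕ) < s}),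
        ⁅x, y⁆ ∈ Submodule.span K (⇑b '' {i : Fin n | (i : ℕ) < s}))
    (hSM : ∀ x ∈ Submodule.span K (⇑b '' {i : Fin n | (i : ℕ) < s}),
        ∀ m ∈ Submodule.span K (⇑b '' {i : Fin n | s ≤ (i : ℕ)}),
        ⁅x, m⁆ ∈ Submodule.span K (⇑b '' {i : Fin n | s ≤ (i : ℕ)}))
    (C' : Fin n → Fin n → Fin n → K)
    (hC' : ∀ i j k, C' i j k = if s ≤ (i : ℕ) ∧ s ≤ (j : ℕ) then 0 else C i j k) :
    (∀ i : Fin n, (i : ℕ) < s → ∀ F : MvPolynomial (Fin n) K,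
        coadD C i F = coadD C' i F) ∧
    (∀ F : MvPolynomial (Fin n) K, (∀ i : Fin n, coadD C' i F = 0) →
        ∀ i : Fin n, (i : ℕ) < s → coadD C i F = 0) :=
  stmt3_general C C' hC'
end

section
/- Let K be a field and L a finite-dimensional Lie algebra over K with basis X_1, …, X_n and structure constants C_{ij}^k, such that span(X_1, …, X_s) is a Lie subalgebra S and M := span(X_{s+1}, …, X_n) satisfies [S, M] ⊆ M. If a polynomial F ∈ K[x_1, …, x_n] satisfies D_iF = 0 for all 1 ≤ i ≤ s (in particular, if F is a Casimir invariant of L, i.e. D_iF = 0 for all 1 ≤ i ≤ n), then every bihomogeneous component Φ_{(a,b)} of F also satisfies D_iΦ_{(a,b)} = 0 for all 1 ≤ i ≤ s; that is, each term of the decomposition of a Casimir operator into bihomogeneous components is a solution of the missing label problem for the reduction L ⊇ S. -/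
/-- Degree of a monomial exponent in the subalgebra variables `x_1, …, x_s`. -/
def degS {n : ℕ} (s : ℕ) (d : Fin n →₀ ℕ) : ℕ :=
  ∑ i ∈ Finset.univ.filter (fun i : Fin n => (i : ℕ) < s), d i

/-- Degree of a monomial exponent in the complementary variables `x_{s+1}, …, x_n`. -/
def degM {n : ℕ} (s : ℕ) (d : Fin n →₀ ℕ) : ℕ :=
  ∑ i ∈ Finset.univ.filter (fun i : Fin n => s ≤ (i : ℕ)), d i

/-- The bihomogeneous component of bidegree `(a, b)` of a polynomial `F`. -/
noncomputable def bihomComp {K : Type*} [Field K] {n : ℕ} (s a b : ℕ)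
    (F : MvPolynomial (Fin n) K) : MvPolynomial (Fin n) K :=
  ∑ d ∈ F.support.filter (fun d => degS s d = a ∧ degM s d = b),
    MvPolynomial.monomial d (F.coeff d)

/-!
The bidegree is the weighted degree for the weight `(1, 0)` on `x_j`, `j < s`, and `(0, 1)` on
the other variables, so `Φ_{(a,b)}` is a weighted homogeneous component of `F`. For `i < s`, the
conditions `[S, S] ⊆ S` and `[S, M] ⊆ M` say that `C_{ij}^k ≠ 0` only when `x_j` and `x_k` have
the same weight; then every term `x_k ∂/∂x_j` of `D_i` preserves the weighted degree, so `D_i`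
commutes with taking components, and `D_iΦ_{(a,b)}` is the `(a, b)` component of `D_iF = 0`.
-/

open MvPolynomial

theorem Module.Basis.coeff_eq_zero_of_sum_mem_span_image {ι R M : Type*} [Fintype ι]
    [Semiring R] [AddCommMonoid M] [Module R M] (b : Module.Basis ι R M) {c : ι → R}
    {T : Set ι} (h : ∑ k, c k • b k ∈ Submodule.span R (b '' T)) {k : ι} (hk : k ∉ T) :
    c k = 0 := by
  rw [b.mem_span_image] at h
  by_contra hc
  exact hk (h (Finsupp.mem_support_iff.mpr (by rwa [b.repr_sum_self])))

namespace MvPolynomial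

variable {σ R M : Type*} [CommSemiring R] [AddCommMonoid M] {w : σ → M}

theorem IsWeightedHomogeneous.X_mul_pderiv {j k : σ} (hjk : w j = w k) {m : M}
    {φ : MvPolynomial σ R} (hφ : φ.IsWeightedHomogeneous w m) :
    (X k * pderiv j φ).IsWeightedHomogeneous w m := by
  classical
  induction hφ using IsWeightedHomogeneous.induction_on with
  | zero => simpa using isWeightedHomogeneous_zero R w m
  | add p q _ _ hp hq => simpa only [map_add, mul_add] using hp.add hq
  | monomial d r hd =>
    rw [pderiv_monomial]
    by_cases hdj : d j = 0
    · simpa [hdj] using isWeightedHomogeneous_zero R w m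
    -- `X k` replaces the factor `X j` removed by `pderiv j`, which has the same weight
    have hweight : w k + Finsupp.weight w (d - Finsupp.single j 1) = m := by
      have hle : Finsupp.single j 1 ≤ d :=
        Finsupp.single_le_iff.mpr (Nat.one_le_iff_ne_zero.mpr hdj)
      rw [← hd, ← hjk, ← tsub_add_cancel_of_le hle, map_add, Finsupp.weight_single, one_smul,
        add_tsub_cancel_right, add_comm]
    exact hweight ▸ (isWeightedHomogeneous_X R w k).mul
      (isWeightedHomogeneous_monomial w _ _ rfl)

theorem weightedHomogeneousComponent_map_of_isWeightedHomogeneous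
    (f : MvPolynomial σ R →ₗ[R] MvPolynomial σ R)
    (hf : ∀ {m : M} {φ : MvPolynomial σ R}, φ.IsWeightedHomogeneous w m →
      (f φ).IsWeightedHomogeneous w m)
    (m : M) (φ : MvPolynomial σ R) :
    weightedHomogeneousComponent w m (f φ) = f (weightedHomogeneousComponent w m φ) := by
  conv_lhs => rw [← sum_weightedHomogeneousComponent w φ]
  have hfin := weightedHomogeneousComponent_finsupp (w := w) φ
  have map_finsum (g : MvPolynomial σ R →ₗ[R] MvPolynomial σ R) {ψ : M → MvPolynomial σ R}
      (hψ : ψ.HasFiniteSupport) : g (∑ᶠ m, ψ m) = ∑ᶠ m, g (ψ m) :=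
    g.toAddMonoidHom.map_finsum hψ
  rw [map_finsum f hfin, map_finsum _ (ψ := fun m' => f _) (hfin.comp (map_zero f))]
  refine (finsum_eq_single _ m fun m' hm' => ?_).trans ?_
  · have hm'φ := hf (weightedHomogeneousComponent_isWeightedHomogeneous m' φ)
    exact hm'φ.weightedHomogeneousComponent_ne m hm'.symm
  · have hmφ := hf (weightedHomogeneousComponent_isWeightedHomogeneous m φ)
    exact hmφ.weightedHomogeneousComponent_same

end MvPolynomial

section Coadjoint

variable {K : Type*} [Field K] {n : ℕ}

noncomputable def coadDLinearMap (C : Fin n → Fin n → Fin n → K) (i : Fin n) :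
    MvPolynomial (Fin n) K →ₗ[K] MvPolynomial (Fin n) K :=
  ∑ j, ∑ k, C i j k • (LinearMap.mulLeft K (X k) ∘ₗ (pderiv j).toLinearMap)

theorem coe_coadDLinearMap (C : Fin n → Fin n → Fin n → K) (i : Fin n) :
    ⇑(coadDLinearMap C i) = coadD C i := by
  ext F
  simp [coadDLinearMap, coadD]

variable {M : Type*} [AddCommMonoid M] {w : Fin n → M} {C : Fin n → Fin n → Fin n → K}
  {i : Fin n}

theorem MvPolynomial.IsWeightedHomogeneous.coadD (hw : ∀ j k, C i j k ≠ 0 → w j = w k) {m : M}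
    {φ : MvPolynomial (Fin n) K} (hφ : φ.IsWeightedHomogeneous w m) :
    (coadD C i φ).IsWeightedHomogeneous w m := by
  rw [← mem_weightedHomogeneousSubmodule] at hφ ⊢
  refine Submodule.sum_mem _ fun j _ => Submodule.sum_mem _ fun k _ => ?_
  by_cases hc : C i j k = 0
  · simp [hc]
  · exact Submodule.smul_mem _ _ (hφ.X_mul_pderiv (hw j k hc))

theorem weightedHomogeneousComponent_coadD (hw : ∀ j k, C i j k ≠ 0 → w j = w k) (m : M)
    (φ : MvPolynomial (Fin n) K) :
    weightedHomogeneousComponent w m (coadD C i φ) =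
      coadD C i (weightedHomogeneousComponent w m φ) := by
  simpa only [coe_coadDLinearMap] using
    weightedHomogeneousComponent_map_of_isWeightedHomogeneous (coadDLinearMap C i)
      (fun hφ => by simpa only [coe_coadDLinearMap] using hφ.coadD hw) m φ

end Coadjoint

section Bidegree

variable {n : ℕ}

def bidegWeight (s : ℕ) : Fin n → ℕ × ℕ :=
  fun j => if (j : ℕ) < s then (1, 0) else (0, 1)

theorem weight_bidegWeight (s : ℕ) (d : Fin n →₀ ℕ) :
    Finsupp.weight (bidegWeight s) d = (degS s d, degM s d) := by
  rw [Finsupp.weight_apply, Finsupp.sum_fintype _ _ (by simp)]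
  ext
  · simp [bidegWeight, degS, Prod.fst_sum, Finset.sum_filter, apply_ite]
  · simp only [bidegWeight, degM, Prod.snd_sum, Finset.sum_filter, apply_ite]
    refine Finset.sum_congr rfl fun j _ => ?_
    split_ifs <;> simp <;> omega

theorem bihomComp_eq_weightedHomogeneousComponent {K : Type*} [Field K] (s a b : ℕ)
    (F : MvPolynomial (Fin n) K) :
    bihomComp s a b F = weightedHomogeneousComponent (bidegWeight s) (a, b) F := by
  classical
  simp only [bihomComp, weightedHomogeneousComponent_apply, weight_bidegWeight, Prod.mk.injEq]

end Bidegree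

theorem bidegWeight_eq_of_structConst_ne_zero {K : Type*} [Field K] {L : Type*} [LieRing L]
    [LieAlgebra K L] {n s : ℕ} (b : Module.Basis (Fin n) K L) (C : Fin n → Fin n → Fin n → K)
    (hC : ∀ i j, ⁅b i, b j⁆ = ∑ k, C i j k • b k)
    (hSsub : ∀ x ∈ Submodule.span K (⇑b '' {i : Fin n | (i : ℕ) < s}),
        ∀ y ∈ Submodule.span K (⇑b '' {i : Fin n | (i : ℕ) < s}),
        ⁅x, y⁆ ∈ Submodule.span K (⇑b '' {i : Fin n | (i : ℕ) < s}))
    (hSM : ∀ x ∈ Submodule.span K (⇑b '' {i : Fin n | (i : ℕ) < s}),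
        ∀ m ∈ Submodule.span K (⇑b '' {i : Fin n | s ≤ (i : ℕ)}),
        ⁅x, m⁆ ∈ Submodule.span K (⇑b '' {i : Fin n | s ≤ (i : ℕ)}))
    {i : Fin n} (hi : (i : ℕ) < s) {j k : Fin n} (hijk : C i j k ≠ 0) :
    bidegWeight s j = bidegWeight s k := by
  have mem_span {T : Set (Fin n)} {l : Fin n} (hl : l ∈ T) : b l ∈ Submodule.span K (b '' T) :=
    Submodule.subset_span ⟨l, hl, rfl⟩
  by_cases hj : (j : ℕ) < s
  · have hk : (k : ℕ) < s := by
      by_contra hk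
      have hbracket := hC i j ▸ hSsub _ (mem_span hi) _ (mem_span hj)
      exact hijk (b.coeff_eq_zero_of_sum_mem_span_image hbracket hk)
    simp [bidegWeight, hj, hk]
  · have hk : ¬ (k : ℕ) < s := by
      intro hk
      have hbracket := hC i j ▸ hSM _ (mem_span hi) _ (mem_span (not_lt.mp hj))
      exact hijk (b.coeff_eq_zero_of_sum_mem_span_image hbracket (not_le.mpr hk))
    simp [bidegWeight, hj, hk]

theorem stmt5_general {K : Type*} [Field K] {L : Type*} [LieRing L] [LieAlgebra K L]
    {n s : ℕ} (b : Module.Basis (Fin n) K L)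
    (C : Fin n → Fin n → Fin n → K)
    (hC : ∀ i j, ⁅b i, b j⁆ = ∑ k, C i j k • b k)
    (hSsub : ∀ x ∈ Submodule.span K (⇑b '' {i : Fin n | (i : ℕ) < s}),
        ∀ y ∈ Submodule.span K (⇑b '' {i : Fin n | (i : ℕ) < s}),
        ⁅x, y⁆ ∈ Submodule.span K (⇑b '' {i : Fin n | (i : ℕ) < s}))
    (hSM : ∀ x ∈ Submodule.span K (⇑b '' {i : Fin n | (i : ℕ) < s}),
        ∀ m ∈ Submodule.span K (⇑b '' {i : Fin n | s ≤ (i : ℕ)}),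
        ⁅x, m⁆ ∈ Submodule.span K (⇑b '' {i : Fin n | s ≤ (i : ℕ)}))
    (F : MvPolynomial (Fin n) K)
    (hF : ∀ i : Fin n, (i : ℕ) < s → coadD C i F = 0) :
    ∀ a bdeg : ℕ, ∀ i : Fin n, (i : ℕ) < s →
      coadD C i (bihomComp s a bdeg F) = 0 := by
  intro a bdeg i hi
  have hw : ∀ j k, C i j k ≠ 0 → bidegWeight s j = bidegWeight s k := fun _ _ =>
    bidegWeight_eq_of_structConst_ne_zero b C hC hSsub hSM hi
  rw [bihomComp_eq_weightedHomogeneousComponent, ← weightedHomogeneousComponent_coadD hw,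
    hF i hi, map_zero]

/-- Let `X_1, …, X_n` be a basis of a Lie algebra `L` adapted to a reduction
chain: `S = span(X_1, …, X_s)` is a subalgebra and `M = span(X_{s+1}, …, X_n)` satisfies
`[S, M] ⊆ M`.  If `F` satisfies `D_iF = 0` for all `1 ≤ i ≤ s` (in particular, if `F` is a
Casimir invariant of `L`), then every bihomogeneous component `Φ_{(a,b)}` of `F` satisfies
`D_iΦ_{(a,b)} = 0` for all `1 ≤ i ≤ s`: every term of the decomposition of a Casimir operator
is a solution of the missing label problem for the reduction `L ⊇ S`. -/
theorem stmt5 {K : Type*} [Field K] {L : Type*} [LieRing L] [LieAlgebra K L]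
    {n s : ℕ} (hsn : s ≤ n) (b : Module.Basis (Fin n) K L)
    (C : Fin n → Fin n → Fin n → K)
    (hC : ∀ i j, ⁅b i, b j⁆ = ∑ k, C i j k • b k)
    (hSsub : ∀ x ∈ Submodule.span K (⇑b '' {i : Fin n | (i : ℕ) < s}),
        ∀ y ∈ Submodule.span K (⇑b '' {i : Fin n | (i : ℕ) < s}),
        ⁅x, y⁆ ∈ Submodule.span K (⇑b '' {i : Fin n | (i : ℕ) < s}))
    (hSM : ∀ x ∈ Submodule.span K (⇑b '' {i : Fin n | (i : ℕ) < s}),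
        ∀ m ∈ Submodule.span K (⇑b '' {i : Fin n | s ≤ (i : ℕ)}),
        ⁅x, m⁆ ∈ Submodule.span K (⇑b '' {i : Fin n | s ≤ (i : ℕ)}))
    (F : MvPolynomial (Fin n) K)
    (hF : ∀ i : Fin n, (i : ℕ) < s → coadD C i F = 0) :
    ∀ a bdeg : ℕ, ∀ i : Fin n, (i : ℕ) < s →
      coadD C i (bihomComp s a bdeg F) = 0 :=
  stmt5_general b C hC hSsub hSM F hF
end

section
/- Let K be a field and L a finite-dimensional Lie algebra over K with basis X_1, …, X_n and structure constants C_{ij}^k, such that span(X_1, …, X_s) is a Lie subalgebra S and M := span(X_{s+1}, …, X_n) satisfies [S, M] ⊆ M; let C'_{ij}^k be the structure constants of the associated Inönü–Wigner contraction g. Let A(x) and A'(x) be the n × n matrices with entries A(x)_{ij} = Σ_k C_{ij}^k x_k and A'(x)_{ij} = Σ_k C'_{ij}^k x_k, regarded as matrices over the fraction field K(x_1, …, x_n) of the polynomial ring. Then rank A'(x) ≤ rank A(x); equivalently, setting N(h) := n − (generic rank of the structure matrix of h), the number of functionally independent invariants does not decrease under the contraction: N(g) ≥ N(L). -/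
/-!
Rescale the basis by `X_i ↦ t ^ d_i X_i`, with `d_i = 0` on `S` and `1` on `M`. The structure
constants become `t ^ (d_i + d_j - d_k) C_{ij}^k`; the reduction-chain conditions make these
polynomial in `t`, and at `t = 0` they are the contracted constants `C'`. So `A'(x)` is the
specialization at `t = 0` of a matrix over `K(x)[t]` which, over `K(x)(t)`, equals
`D · A(t^{-d_k} x_k) · D` with `D = diag(t ^ d_i)` invertible. Specialization cannot raise the
rank, and neither can the substitution `x_k ↦ t^{-d_k} x_k` in `A(x)`.
-/

/-- The structure matrix `A(x)_{ij} = Σ_k C_{ij}^k x_k` of a Lie algebra with structure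
constants `C`, viewed over the fraction field `K(x_1, …, x_n)` of the polynomial ring. -/
noncomputable def structMatrix {K : Type*} [Field K] {n : ℕ}
    (C : Fin n → Fin n → Fin n → K) :
    Matrix (Fin n) (Fin n) (FractionRing (MvPolynomial (Fin n) K)) :=
  fun i j => algebraMap (MvPolynomial (Fin n) K) (FractionRing (MvPolynomial (Fin n) K))
    (∑ k, C i j k • MvPolynomial.X k)

open Matrix Module Polynomial

section Rank

variable {F : Type*} [Field F]

lemma exists_linearIndependent_comp_fin {ι V : Type*} [AddCommGroup V] [Module F V]
    (v : ι → V) [Module.Finite F (Submodule.span F (Set.range v))] {r : ℕ}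
    (hr : finrank F (Submodule.span F (Set.range v)) = r) :
    ∃ g : Fin r → ι, LinearIndependent F (v ∘ g) := by
  subst hr
  obtain ⟨w, hw, -, hw_li⟩ := Submodule.exists_fun_fin_finrank_span_eq F (Set.range v)
  choose g hg using hw
  exact ⟨g, by rwa [show v ∘ g = w from funext hg]⟩

namespace Matrix

variable {m n : Type*} [Fintype n]

lemma exists_det_submatrix_ne_zero [Fintype m] (A : Matrix m n F) :
    ∃ (f : Fin A.rank → m) (g : Fin A.rank → n), (A.submatrix f g).det ≠ 0 := by
  obtain ⟨g, hg⟩ := exists_linearIndependent_comp_fin A.col A.rank_eq_finrank_span_cols.symm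
  have hB : (A.submatrix id g).rank = A.rank := by
    rw [← rank_transpose]
    exact (LinearIndependent.rank_matrix hg).trans (Fintype.card_fin _)
  obtain ⟨f, hf⟩ := exists_linearIndependent_comp_fin (A.submatrix id g).row
    ((A.submatrix id g).rank_eq_finrank_span_row.symm.trans hB)
  refine ⟨f, g, ?_⟩
  rw [← isUnit_iff_ne_zero, ← isUnit_iff_isUnit_det, ← linearIndependent_rows_iff_isUnit]
  exact hf

lemma le_rank_of_det_submatrix_ne_zero {r : ℕ} (A : Matrix m n F) (f : Fin r → m)
    (g : Fin r → n) (h : (A.submatrix f g).det ≠ 0) : r ≤ A.rank :=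
  calc r = (A.submatrix f g).rank := by rw [rank_of_det_ne_zero h, Fintype.card_fin]
    _ ≤ A.rank := rank_submatrix_le A f g

/-- An `r × r` minor that survives `φ` is nonzero in `R`, hence survives the injective `ι`. -/
theorem rank_map_le_rank_map_of_injective [Fintype m] {R E : Type*} [CommRing R] [Field E]
    (φ : R →+* F) (ι : R →+* E) (hι : Function.Injective ι) (A : Matrix m n R) :
    (A.map φ).rank ≤ (A.map ι).rank := by
  obtain ⟨f, g, h⟩ := exists_det_submatrix_ne_zero (A.map φ)
  refine le_rank_of_det_submatrix_ne_zero (A.map ι) f g ?_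
  rw [submatrix_map, ← RingHom.mapMatrix_apply, ← RingHom.map_det] at h ⊢
  exact (map_ne_zero_iff ι hι).mpr fun h0 => h (by rw [h0, map_zero])

end Matrix

end Rank

lemma Module.Basis.repr_eq_zero_of_mem_span_image {ι R M : Type*} [Semiring R]
    [AddCommMonoid M] [Module R M] (b : Basis ι R M) {t : Set ι} {x : M}
    (hx : x ∈ Submodule.span R (b '' t)) {k : ι} (hk : k ∉ t) : b.repr x k = 0 :=
  Finsupp.notMem_support_iff.mp fun h => hk (b.mem_span_image.mp hx h)

section Contraction

variable {K : Type*} [Field K] {n : ℕ}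

local notation "R" => MvPolynomial (Fin n) K
local notation "E" => FractionRing (MvPolynomial (Fin n) K)[X]

noncomputable def structPolyMatrix (C : Fin n → Fin n → Fin n → K) :
    Matrix (Fin n) (Fin n) R :=
  of fun i j => ∑ k, C i j k • MvPolynomial.X k

lemma structMatrix_eq_map (C : Fin n → Fin n → Fin n → K) :
    structMatrix C = (structPolyMatrix C).map (algebraMap R (FractionRing R)) := rfl

def weightedContraction (C : Fin n → Fin n → Fin n → K) (d : Fin n → ℕ) :
    Fin n → Fin n → Fin n → K :=
  fun i j k => if d k = d i + d j then C i j k else 0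

/-- The structure matrix of the rescaled constants `t ^ (d_i + d_j - d_k) C_{ij}^k`, with `t` the
polynomial variable. -/
noncomputable def contractionFamily (C : Fin n → Fin n → Fin n → K) (d : Fin n → ℕ) :
    Matrix (Fin n) (Fin n) R[X] :=
  of fun i j => ∑ k, C i j k • (X ^ (d i + d j - d k) * Polynomial.C (MvPolynomial.X k))

variable {C : Fin n → Fin n → Fin n → K} {d : Fin n → ℕ}

lemma contractionFamily_map_eval_zero (hC : ∀ i j k, C i j k ≠ 0 → d k ≤ d i + d j) :
    (contractionFamily C d).map (evalRingHom (0 : R)) =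
      structPolyMatrix (weightedContraction C d) := by
  ext i j : 1
  simp only [contractionFamily, structPolyMatrix, weightedContraction, map_apply, of_apply,
    map_sum]
  refine Finset.sum_congr rfl fun k _ => ?_
  by_cases hk : C i j k = 0
  · simp [hk]
  · have := hC i j k hk
    by_cases h : d k = d i + d j
    · simp [h]
    · simp [h, show d i + d j - d k ≠ 0 by omega]

lemma contractionFamily_map_eq_diagonal_mul (hC : ∀ i j k, C i j k ≠ 0 → d k ≤ d i + d j) :
    (contractionFamily C d).map (algebraMap R[X] E) =
      diagonal (fun i => algebraMap R[X] E X ^ d i) *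
        (structPolyMatrix C).map (MvPolynomial.aeval fun k =>
          (algebraMap R[X] E X)⁻¹ ^ d k * algebraMap R[X] E (Polynomial.C (MvPolynomial.X k))) *
        diagonal (fun i => algebraMap R[X] E X ^ d i) := by
  have hT : algebraMap R[X] E X ≠ 0 :=
    (map_ne_zero_iff _ (IsFractionRing.injective R[X] E)).mpr X_ne_zero
  ext i j : 1
  simp only [contractionFamily, structPolyMatrix, map_apply, of_apply, mul_diagonal,
    diagonal_mul, map_sum, Finset.mul_sum, Finset.sum_mul]
  refine Finset.sum_congr rfl fun k _ => ?_
  by_cases hk : C i j k = 0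
  · simp [hk]
  · have := hC i j k hk
    simp only [map_smul, MvPolynomial.aeval_X]
    rw [Algebra.smul_def, Algebra.smul_def, map_mul, map_mul, map_pow,
      ← IsScalarTower.algebraMap_apply, pow_sub₀ _ hT this, pow_add, inv_pow]
    ring

theorem rank_structMatrix_weightedContraction_le
    (hC : ∀ i j k, C i j k ≠ 0 → d k ≤ d i + d j) :
    (structMatrix (weightedContraction C d)).rank ≤ (structMatrix C).rank := by
  set T := algebraMap R[X] E X
  set ψ : R →ₐ[K] E := MvPolynomial.aeval fun k =>
    T⁻¹ ^ d k * algebraMap R[X] E (Polynomial.C (MvPolynomial.X k))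
  have hT : T ≠ 0 := (map_ne_zero_iff _ (IsFractionRing.injective R[X] E)).mpr X_ne_zero
  have hD : IsUnit (diagonal fun i => T ^ d i).det := by
    rw [det_diagonal, isUnit_iff_ne_zero, Finset.prod_ne_zero_iff]
    exact fun i _ => pow_ne_zero _ hT
  calc (structMatrix (weightedContraction C d)).rank
      = ((contractionFamily C d).map
          ((algebraMap R (FractionRing R)).comp (evalRingHom 0))).rank := by
        rw [RingHom.coe_comp, ← Matrix.map_map, contractionFamily_map_eval_zero hC,
          structMatrix_eq_map]
    _ ≤ ((contractionFamily C d).map (algebraMap R[X] E)).rank :=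
        rank_map_le_rank_map_of_injective _ _ (IsFractionRing.injective _ _) _
    _ = ((structPolyMatrix C).map ψ).rank := by
        rw [contractionFamily_map_eq_diagonal_mul hC, rank_mul_eq_left_of_isUnit_det _ _ hD,
          rank_mul_eq_right_of_isUnit_det _ _ hD]
    _ ≤ (structMatrix C).rank :=
        rank_map_le_rank_map_of_injective ψ.toRingHom _ (IsFractionRing.injective _ _) _

end Contraction

section InonuWigner

variable {K : Type*} [Field K] {n s : ℕ} {C : Fin n → Fin n → Fin n → K}

def inonuWignerWeight (s : ℕ) (i : Fin n) : ℕ := if (i : ℕ) < s then 0 else 1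

lemma inonuWignerWeight_le_add
    (hSS : ∀ i j k : Fin n, (i : ℕ) < s → (j : ℕ) < s → s ≤ (k : ℕ) → C i j k = 0)
    (i j k : Fin n) (hijk : C i j k ≠ 0) :
    inonuWignerWeight s k ≤ inonuWignerWeight s i + inonuWignerWeight s j := by
  by_contra h
  obtain ⟨hi, hj, hk⟩ : (i : ℕ) < s ∧ (j : ℕ) < s ∧ s ≤ (k : ℕ) := by
    unfold inonuWignerWeight at h
    split_ifs at h <;> omega
  exact hijk (hSS i j k hi hj hk)

lemma weightedContraction_inonuWignerWeight
    (hSS : ∀ i j k : Fin n, (i : ℕ) < s → (j : ℕ) < s → s ≤ (k : ℕ) → C i j k = 0)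
    (hSM : ∀ i j k : Fin n, (i : ℕ) < s → s ≤ (j : ℕ) → (k : ℕ) < s → C i j k = 0)
    (hMS : ∀ i j k : Fin n, s ≤ (i : ℕ) → (j : ℕ) < s → (k : ℕ) < s → C i j k = 0)
    (i j k : Fin n) :
    weightedContraction C (inonuWignerWeight s) i j k =
      if s ≤ (i : ℕ) ∧ s ≤ (j : ℕ) then 0 else C i j k := by
  unfold weightedContraction inonuWignerWeight
  rcases lt_or_ge (i : ℕ) s with hi | hi <;> rcases lt_or_ge (j : ℕ) s with hj | hj <;>
    rcases lt_or_ge (k : ℕ) s with hk | hk <;>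
    simp [hi, hj, hk, not_lt.mpr, hSS, hSM, hMS]

theorem rank_structMatrix_inonuWigner_le
    (hSS : ∀ i j k : Fin n, (i : ℕ) < s → (j : ℕ) < s → s ≤ (k : ℕ) → C i j k = 0)
    (hSM : ∀ i j k : Fin n, (i : ℕ) < s → s ≤ (j : ℕ) → (k : ℕ) < s → C i j k = 0)
    (hMS : ∀ i j k : Fin n, s ≤ (i : ℕ) → (j : ℕ) < s → (k : ℕ) < s → C i j k = 0)
    {C' : Fin n → Fin n → Fin n → K}
    (hC' : ∀ i j k, C' i j k = if s ≤ (i : ℕ) ∧ s ≤ (j : ℕ) then 0 else C i j k) :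
    (structMatrix C').rank ≤ (structMatrix C).rank := by
  obtain rfl : C' = weightedContraction C (inonuWignerWeight s) := by
    funext i j k
    rw [hC', weightedContraction_inonuWignerWeight hSS hSM hMS]
  exact rank_structMatrix_weightedContraction_le (inonuWignerWeight_le_add hSS)

end InonuWigner

theorem stmt8_general {K : Type*} [Field K] {L : Type*} [LieRing L] [LieAlgebra K L]
    {n s : ℕ} (b : Module.Basis (Fin n) K L)
    (C : Fin n → Fin n → Fin n → K)
    (hC : ∀ i j, ⁅b i, b j⁆ = ∑ k, C i j k • b k)
    (hSsub : ∀ x ∈ Submodule.span K (⇑b '' {i : Fin n | (i : ℕ) < s}),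
        ∀ y ∈ Submodule.span K (⇑b '' {i : Fin n | (i : ℕ) < s}),
        ⁅x, y⁆ ∈ Submodule.span K (⇑b '' {i : Fin n | (i : ℕ) < s}))
    (hSM : ∀ x ∈ Submodule.span K (⇑b '' {i : Fin n | (i : ℕ) < s}),
        ∀ m ∈ Submodule.span K (⇑b '' {i : Fin n | s ≤ (i : ℕ)}),
        ⁅x, m⁆ ∈ Submodule.span K (⇑b '' {i : Fin n | s ≤ (i : ℕ)}))
    (C' : Fin n → Fin n → Fin n → K)
    (hC' : ∀ i j k, C' i j k = if s ≤ (i : ℕ) ∧ s ≤ (j : ℕ) then 0 else C i j k) :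
    (structMatrix C').rank ≤ (structMatrix C).rank ∧
    n - (structMatrix C).rank ≤ n - (structMatrix C').rank := by
  have hrepr : ∀ i j k, C i j k = b.repr ⁅b i, b j⁆ k := fun i j k => by
    rw [hC, b.repr_sum_self]
  have hbS : ∀ i : Fin n, (i : ℕ) < s → b i ∈ Submodule.span K (⇑b '' {i | (i : ℕ) < s}) :=
    fun i hi => Submodule.subset_span ⟨i, hi, rfl⟩
  have hbM : ∀ i : Fin n, s ≤ (i : ℕ) → b i ∈ Submodule.span K (⇑b '' {i | s ≤ (i : ℕ)}) :=
    fun i hi => Submodule.subset_span ⟨i, hi, rfl⟩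
  have hCSS : ∀ i j k : Fin n, (i : ℕ) < s → (j : ℕ) < s → s ≤ (k : ℕ) → C i j k = 0 :=
    fun i j k hi hj hk => by
      rw [hrepr]
      exact b.repr_eq_zero_of_mem_span_image (hSsub _ (hbS i hi) _ (hbS j hj)) (not_lt.mpr hk)
  have hCSM : ∀ i j k : Fin n, (i : ℕ) < s → s ≤ (j : ℕ) → (k : ℕ) < s → C i j k = 0 :=
    fun i j k hi hj hk => by
      rw [hrepr]
      exact b.repr_eq_zero_of_mem_span_image (hSM _ (hbS i hi) _ (hbM j hj)) (not_le.mpr hk)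
  have hCMS : ∀ i j k : Fin n, s ≤ (i : ℕ) → (j : ℕ) < s → (k : ℕ) < s → C i j k = 0 :=
    fun i j k hi hj hk => by
      rw [hrepr, ← lie_skew, map_neg, Finsupp.neg_apply, ← hrepr, hCSM j i k hj hi hk, neg_zero]
  have hrank := rank_structMatrix_inonuWigner_le hCSS hCSM hCMS hC'
  exact ⟨hrank, Nat.sub_le_sub_left hrank n⟩

/-- Let `X_1, …, X_n` be a basis of a Lie algebra `L` adapted to a reduction
chain (`S = span(X_1, …, X_s)` a subalgebra, `M = span(X_{s+1}, …, X_n)` with `[S, M] ⊆ M`),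
and let `C'` be the structure constants of the associated Inönü–Wigner contraction.  Then
`rank A'(x) ≤ rank A(x)`, equivalently the number `N(h) = n − rank` of functionally
independent invariants does not decrease under the contraction: `N(g) ≥ N(L)`. -/
theorem stmt8 {K : Type*} [Field K] {L : Type*} [LieRing L] [LieAlgebra K L]
    {n s : ℕ} (hsn : s ≤ n) (b : Module.Basis (Fin n) K L)
    (C : Fin n → Fin n → Fin n → K)
    (hC : ∀ i j, ⁅b i, b j⁆ = ∑ k, C i j k • b k)
    (hSsub : ∀ x ∈ Submodule.span K (⇑b '' {i : Fin n | (i : ℕ) < s}),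
        ∀ y ∈ Submodule.span K (⇑b '' {i : Fin n | (i : ℕ) < s}),
        ⁅x, y⁆ ∈ Submodule.span K (⇑b '' {i : Fin n | (i : ℕ) < s}))
    (hSM : ∀ x ∈ Submodule.span K (⇑b '' {i : Fin n | (i : ℕ) < s}),
        ∀ m ∈ Submodule.span K (⇑b '' {i : Fin n | s ≤ (i : ℕ)}),
        ⁅x, m⁆ ∈ Submodule.span K (⇑b '' {i : Fin n | s ≤ (i : ℕ)}))
    (C' : Fin n → Fin n → Fin n → K)
    (hC' : ∀ i j k, C' i j k = if s ≤ (i : ℕ) ∧ s ≤ (j : ℕ) then 0 else C i j k) :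
    (structMatrix C').rank ≤ (structMatrix C).rank ∧
    n - (structMatrix C).rank ≤ n - (structMatrix C').rank :=
  stmt8_general b C hC hSsub hSM C' hC'
end

section
/- Let g be the 8-dimensional complex Lie algebra with basis {L_j (j = 1,2,3), T_{jk} = T_{kj} (1 ≤ j,k ≤ 3, with T_{11} + T_{22} + T_{33} = 0)} and brackets [L_j, L_k] = iε_{jkl}L_l, [L_j, T_{kl}] = iε_{jkm}T_{lm} + iε_{jlm}T_{km}, [T_{jk}, T_{lm}] = (i/4)(δ_{jl}ε_{kmn} + δ_{jm}ε_{kln} + δ_{kl}ε_{jmn} + δ_{km}ε_{jln})L_n (summation over repeated indices from 1 to 3). Then in the universal enveloping algebra U(g), the symmetrized cubic element C_3 := Sym(Σ_{i,k,l} T_{ik}T_{kl}T_{li}) commutes with L_1, L_2 and L_3; i.e. the contracted cubic invariant is a missing label operator for the Elliott reduction su(3) ⊃ so(3). -/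
/-!
Let `M` be the matrix `(ι T_kl)` over `U(g)`. Since `T` is symmetric and `ε` antisymmetric, the
relation for `⁅L_j, T_kl⁆` says that commuting with `ι L_j` acts on the entries of `M` as the
matrix commutator with the constant matrix `A_j = (i ε_jkm)_km`. Hence `ι L_j • 1 - A_j`
commutes with `M` and with every power `M ^ p`; taking traces, and using that the entries of
`A_j` are central, `ι L_j` commutes with `tr (M ^ p)`. By the symmetry of `T`, each of the six
orderings of `T_ik T_kl T_li`, summed over `i, k, l`, gives `tr (M ^ 3)`, so `C_3 = tr (M ^ 3)`.
-/

/-- The Levi-Civita symbol `ε` on three indices, as a complex number. -/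
noncomputable def eps3 (a b c : Fin 3) : ℂ :=
  ((((b.val : ℤ) - (a.val : ℤ)) * ((c.val : ℤ) - (b.val : ℤ))
      * ((c.val : ℤ) - (a.val : ℤ)) : ℤ) : ℂ) / 2

/-- The Kronecker delta, as a complex number. -/
noncomputable def kdelta (a b : Fin 3) : ℂ := if a = b then 1 else 0

/-- The symmetrization `Sym(abc) = (1/3!) Σ_{σ ∈ S_3} Y_{σ(1)}Y_{σ(2)}Y_{σ(3)}` of a cubic
monomial in the universal enveloping algebra. -/
noncomputable def sym3 {g : Type*} [LieRing g] [LieAlgebra ℂ g] (a b c : g) :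
    UniversalEnvelopingAlgebra ℂ g :=
  (6 : ℂ)⁻¹ • ∑ σ : Equiv.Perm (Fin 3),
    (List.ofFn fun i => UniversalEnvelopingAlgebra.ι ℂ (![a, b, c] (σ i))).prod

open UniversalEnvelopingAlgebra

namespace Matrix

variable {K R n : Type*} [CommSemiring K] [Ring R] [Algebra K R] [Fintype n]

theorem trace_map_algebraMap_mul_comm (A : Matrix n n K) (N : Matrix n n R) :
    (A.map (algebraMap K R) * N).trace = (N * A.map (algebraMap K R)).trace := by
  simp only [trace, diag_apply, mul_apply, map_apply, Algebra.commutes]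
  exact Finset.sum_comm

variable [DecidableEq n]

theorem trace_scalar_mul (x : R) (N : Matrix n n R) : (scalar n x * N).trace = x * N.trace := by
  simp [trace, Finset.mul_sum]

theorem trace_mul_scalar (x : R) (N : Matrix n n R) : (N * scalar n x).trace = N.trace * x := by
  simp [trace, Finset.sum_mul]

theorem commute_trace_pow_of_commutator_eq (A : Matrix n n K) (M : Matrix n n R) (x : R)
    (hx : ∀ k l, x * M k l - M k l * x
      = (A.map (algebraMap K R) * M - M * A.map (algebraMap K R)) k l) (p : ℕ) :
    Commute x (M ^ p).trace := by
  set A' := A.map (algebraMap K R)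
  have hB : Commute (scalar n x - A') M := by
    rw [commute_iff_eq, sub_mul, mul_sub, sub_eq_sub_iff_sub_eq_sub]
    ext k l
    simpa [sub_apply] using hx k l
  have h := congrArg trace (hB.pow_right p).eq
  rwa [sub_mul, mul_sub, trace_sub, trace_sub, trace_scalar_mul, trace_mul_scalar,
    trace_map_algebraMap_mul_comm, sub_left_inj] at h

end Matrix

section TripleSums

variable {n M : Type*} [Fintype n] [AddCommMonoid M]

theorem Finset.sum_sum_sum_rotate (F : n → n → n → M) :
    ∑ i, ∑ k, ∑ l, F k l i = ∑ i, ∑ k, ∑ l, F i k l := by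
  rw [Finset.sum_comm]
  exact Finset.sum_congr rfl fun _ _ => Finset.sum_comm

theorem Finset.sum_sum_sum_swap_inner (F : n → n → n → M) :
    ∑ i, ∑ k, ∑ l, F i l k = ∑ i, ∑ k, ∑ l, F i k l :=
  Finset.sum_congr rfl fun _ _ => Finset.sum_comm

theorem sum_sum_sum_orderings_of_symm {A : Type*} [NonUnitalNonAssocSemiring A]
    (a : n → n → A) (ha : ∀ j k, a j k = a k j) :
    ∑ i, ∑ k, ∑ l, (a i k * a k l * a l i + a i k * a l i * a k l + a k l * a i k * a l i
      + a k l * a l i * a i k + a l i * a i k * a k l + a l i * a k l * a i k)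
      = 6 • ∑ i, ∑ k, ∑ l, a i k * a k l * a l i := by
  set F : n → n → n → A := fun i k l => a i k * a k l * a l i
  -- read backwards, with every factor transposed, an odd ordering becomes a closed path
  have hreverse : ∀ x y z, a x y * a z x * a y z = F y x z := fun x y z => by
    simp only [F, ha x y, ha z x, ha y z]
  have h₂ : ∑ i, ∑ k, ∑ l, F k i l = ∑ i, ∑ k, ∑ l, F i k l := Finset.sum_comm
  have h₃ : ∑ i, ∑ k, ∑ l, F l k i = ∑ i, ∑ k, ∑ l, F i k l :=
    (Finset.sum_sum_sum_rotate fun x y z => F y x z).trans h₂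
  have h₄ : ∑ i, ∑ k, ∑ l, F k l i = ∑ i, ∑ k, ∑ l, F i k l :=
    Finset.sum_sum_sum_rotate F
  have h₅ : ∑ i, ∑ k, ∑ l, F l i k = ∑ i, ∑ k, ∑ l, F i k l :=
    (Finset.sum_sum_sum_rotate fun x y z => F z x y).symm
  have h₆ : ∑ i, ∑ k, ∑ l, F i l k = ∑ i, ∑ k, ∑ l, F i k l :=
    Finset.sum_sum_sum_swap_inner F
  simp only [Finset.sum_add_distrib, hreverse]
  rw [h₂, h₃, h₄, h₅, h₆]
  abel

end TripleSums

section Enveloping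

variable {K g : Type*} [CommRing K] [LieRing g] [LieAlgebra K g]

attribute [local instance 100] LieRing.ofAssociativeRing

theorem ι_lie (x y : g) : ι K ⁅x, y⁆ = ι K x * ι K y - ι K y * ι K x := by
  rw [LieHom.map_lie, Ring.lie_def]

theorem commute_ι_trace_pow_of_lie_eq {n : Type*} [Fintype n] [DecidableEq n]
    (x : g) (T : n → n → g) (A : Matrix n n K) (hT : ∀ j k, T j k = T k j)
    (hA : ∀ j k, A j k = -A k j)
    (hx : ∀ k l, ⁅x, T k l⁆ = (∑ m, A k m • T l m) + ∑ m, A l m • T k m) (p : ℕ) :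
    Commute (ι K x) ((Matrix.of fun k l => ι K (T k l)) ^ p).trace := by
  refine Matrix.commute_trace_pow_of_commutator_eq A _ _ (fun k l => ?_) p
  rw [Matrix.of_apply, ← ι_lie, hx]
  simp [Matrix.mul_apply, Algebra.smul_def, Algebra.commutes, hA _ l, hT _ l,
    Finset.sum_neg_distrib]

end Enveloping

section Symmetrization

variable {g : Type*} [LieRing g] [LieAlgebra ℂ g]

theorem sym3_eq (a b c : g) :
    sym3 a b c = (6 : ℂ)⁻¹ • (ι ℂ a * ι ℂ b * ι ℂ c + ι ℂ a * ι ℂ c * ι ℂ b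
      + ι ℂ b * ι ℂ a * ι ℂ c + ι ℂ b * ι ℂ c * ι ℂ a + ι ℂ c * ι ℂ a * ι ℂ b
      + ι ℂ c * ι ℂ b * ι ℂ a) := by
  open Equiv in
  have huniv : (Finset.univ : Finset (Perm (Fin 3))) = {1, swap 1 2, swap 0 1,
      swap 0 1 * swap 1 2, swap 1 2 * swap 0 1, swap 0 2} := by decide
  rw [sym3, huniv]
  repeat rw [Finset.sum_insert (by decide)]
  simp [List.ofFn_succ, Equiv.swap_apply_def, mul_assoc, add_assoc]

theorem sum_sym3_eq_trace_pow_three {n : Type*} [Fintype n] [DecidableEq n]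
    (T : n → n → g) (hT : ∀ j k, T j k = T k j) :
    ∑ i, ∑ k, ∑ l, sym3 (T i k) (T k l) (T l i)
      = ((Matrix.of fun k l => ι ℂ (T k l)) ^ 3).trace := by
  have hsum := sum_sum_sum_orderings_of_symm (fun k l => ι ℂ (T k l)) fun j k => by rw [hT]
  simp only [sym3_eq, ← Finset.smul_sum, hsum, ← Nat.cast_smul_eq_nsmul ℂ, smul_smul]
  norm_num [pow_three, Matrix.trace, Matrix.mul_apply, Finset.mul_sum, mul_assoc]

end Symmetrization

theorem eps3_swap₂₃ (a b c : Fin 3) : eps3 a c b = -eps3 a b c := by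
  unfold eps3
  push_cast
  ring

theorem stmt10_general {g : Type*} [LieRing g] [LieAlgebra ℂ g]
    (L : Fin 3 → g) (T : Fin 3 → Fin 3 → g)
    (hTsym : ∀ j k, T j k = T k j)
    (hLT : ∀ j k l, ⁅L j, T k l⁆ =
      (∑ m, (Complex.I * eps3 j k m) • T l m) + ∑ m, (Complex.I * eps3 j l m) • T k m) :
    ∀ j, (∑ i, ∑ k, ∑ l, sym3 (T i k) (T k l) (T l i)) * UniversalEnvelopingAlgebra.ι ℂ (L j)
        = UniversalEnvelopingAlgebra.ι ℂ (L j)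
          * ∑ i, ∑ k, ∑ l, sym3 (T i k) (T k l) (T l i) := by
  intro j
  rw [sum_sym3_eq_trace_pow_three T hTsym]
  refine (commute_ι_trace_pow_of_lie_eq (L j) T (Matrix.of fun k m => Complex.I * eps3 j k m)
    hTsym (fun k m => ?_) (hLT j) 3).symm.eq
  simp only [Matrix.of_apply, eps3_swap₂₃ j k m, mul_neg, neg_neg]

/-- In the complexified `su(3)` in the Elliott basis `{L_j, T_{jk}}`, the
symmetrized contracted cubic invariant `C_3 = Sym(Σ T_{ik}T_{kl}T_{li})` commutes with
`L_1, L_2, L_3` in the universal enveloping algebra: it is a missing label operator for the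
reduction `su(3) ⊃ so(3)`. -/
theorem stmt10 {g : Type*} [LieRing g] [LieAlgebra ℂ g]
    (L : Fin 3 → g) (T : Fin 3 → Fin 3 → g)
    (hTsym : ∀ j k, T j k = T k j)
    (hTtr : T 0 0 + T 1 1 + T 2 2 = 0)
    (hLL : ∀ j k, ⁅L j, L k⁆ = ∑ l, (Complex.I * eps3 j k l) • L l)
    (hLT : ∀ j k l, ⁅L j, T k l⁆ =
      (∑ m, (Complex.I * eps3 j k m) • T l m) + ∑ m, (Complex.I * eps3 j l m) • T k m)
    (hTT : ∀ j k l m, ⁅T j k, T l m⁆ =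
      ∑ p, (Complex.I / 4 * (kdelta j l * eps3 k m p + kdelta j m * eps3 k l p
        + kdelta k l * eps3 j m p + kdelta k m * eps3 j l p)) • L p) :
    ∀ j, (∑ i, ∑ k, ∑ l, sym3 (T i k) (T k l) (T l i)) * UniversalEnvelopingAlgebra.ι ℂ (L j)
        = UniversalEnvelopingAlgebra.ι ℂ (L j)
          * ∑ i, ∑ k, ∑ l, sym3 (T i k) (T k l) (T l i) :=
  stmt10_general L T hTsym hLT
end
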